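/- arXiv:1707.05218 — 5 statements merged into one kernel-verified Lean document; each statement's English description precedes it below -/
import Mathlib

section
/- For every natural number n ≥ 0 and every real x, Q_{n+1}(x) = ∑_{m : n ≤ 3m and 2m ≤ n} g̃_{m, n−2m} · m! · x^{3m−n}/(3m−n)!, where the sum is over all integers m with n/3 ≤ m ≤ n/2. -/
open Polynomial

/-- The pair of polynomial families `(P n, Q n)` defined by the recurrence
`P_{n+1} = P_n' + X·Q_n`, `Q_{n+1} = P_n + Q_n'` with `P_0 = 1`, `Q_0 = 0`. -/
noncomputable def airyPQ : ℕ → Polynomial ℝ × Polynomial ℝ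
  | 0 => (1, 0)
  | n + 1 =>
      ((airyPQ n).1.derivative + X * (airyPQ n).2,
       (airyPQ n).1 + (airyPQ n).2.derivative)

noncomputable def airyP (n : ℕ) : Polynomial ℝ := (airyPQ n).1
noncomputable def airyQ (n : ℕ) : Polynomial ℝ := (airyPQ n).2

/-- `g̃_{m,k}`: the `k`-th Taylor coefficient at `0` of `(1 − t + t²/3)^{−(m+1)}`. -/
noncomputable def gTilde (m k : ℕ) : ℝ :=
  iteratedDeriv k (fun t : ℝ => (1 - t + t ^ 2 / 3) ^ (-(m + 1 : ℤ))) 0 /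
    (Nat.factorial k : ℝ)

/-! Eliminating `P` through `P_{n+1} = Q_{n+2} - Q_{n+1}'` gives
`Q_{n+3} = 2 Q_{n+2}' - Q_{n+1}'' + x Q_{n+1}`. The right-hand side of the theorem is
`∑_{2m+k=n} g̃_{m,k} (d/dx)^k x^m` (the factor `m!/(m-k)!` of `(d/dx)^k x^m` vanishes for
`k > m`, which is the constraint `n ≤ 3m`), and it satisfies the same recurrence term by term
in `m`. With `f_m(t) = (1 - t + t²/3)^{-(m+1)}`, the relations `f_m = (1 - t + t²/3) f_{m+1}`
and `f_m' = (m+1)(1 - 2t/3) f_{m+1}` combine to `(m+1)(1-t)² f_{m+1} = (m+1) f_m - t f_m'`,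
whose Taylor coefficients at `0` read
`(m+1)(g̃_{m+1,k} - 2 g̃_{m+1,k-1} + g̃_{m+1,k-2}) = (m+1-k) g̃_{m,k}`; this matches
`(m+1-k) (d/dx)^k x^{m+1} = (m+1) x (d/dx)^k x^m`. -/
noncomputable def taylorCoeff (h : ℝ → ℝ) (k : ℕ) : ℝ :=
  iteratedDeriv k h 0 / k.factorial

section TaylorCoeff

variable {h g : ℝ → ℝ} {k : ℕ}

theorem taylorCoeff_fun_add (hh : ContDiffAt ℝ k h 0) (hg : ContDiffAt ℝ k g 0) :
    taylorCoeff (fun t => h t + g t) k = taylorCoeff h k + taylorCoeff g k := by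
  simp only [taylorCoeff, iteratedDeriv_fun_add hh hg, add_div]

theorem taylorCoeff_fun_sub (hh : ContDiffAt ℝ k h 0) (hg : ContDiffAt ℝ k g 0) :
    taylorCoeff (fun t => h t - g t) k = taylorCoeff h k - taylorCoeff g k := by
  simp only [taylorCoeff, iteratedDeriv_fun_sub hh hg, sub_div]

theorem taylorCoeff_const_mul (c : ℝ) :
    taylorCoeff (fun t => c * h t) k = c * taylorCoeff h k := by
  simp only [taylorCoeff, iteratedDeriv_const_mul_field, mul_div_assoc]

theorem taylorCoeff_deriv : taylorCoeff (deriv h) k = (k + 1) * taylorCoeff h (k + 1) := by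
  simp only [taylorCoeff, ← iteratedDeriv_succ', Nat.factorial_succ]
  push_cast
  field_simp

theorem taylorCoeff_id_mul_succ (hh : ContDiffAt ℝ (k + 1) h 0) :
    taylorCoeff (fun t => t * h t) (k + 1) = taylorCoeff h k := by
  have hid : ContDiffAt ℝ (k + 1) (fun t : ℝ => t) 0 := contDiffAt_id
  simp only [taylorCoeff, iteratedDeriv_fun_mul hid hh, iteratedDeriv_fun_id_zero]
  rw [Finset.sum_eq_single 1 (fun i _ hi => by simp [hi]) (by simp), Nat.factorial_succ]
  simp only [Nat.choose_one_right, ↓reduceIte, mul_one, add_tsub_cancel_right, Nat.cast_mul,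
    Nat.cast_add, Nat.cast_one]
  field_simp

end TaylorCoeff

noncomputable def gTildeGen (m : ℕ) (t : ℝ) : ℝ := (1 - t + t ^ 2 / 3) ^ (-(m + 1 : ℤ))

theorem one_sub_add_sq_div_three_pos (t : ℝ) : 0 < 1 - t + t ^ 2 / 3 := by
  nlinarith [sq_nonneg (t - 3 / 2)]

theorem gTildeGen_eq_inv_pow (m : ℕ) (t : ℝ) :
    gTildeGen m t = ((1 - t + t ^ 2 / 3) ^ (m + 1))⁻¹ := by
  rw [gTildeGen, zpow_neg, ← zpow_natCast]
  push_cast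
  rfl

theorem contDiff_gTildeGen (m : ℕ) : ContDiff ℝ ⊤ (gTildeGen m) := by
  rw [funext (gTildeGen_eq_inv_pow m)]
  exact ContDiff.inv (by fun_prop) fun t => (pow_pos (one_sub_add_sq_div_three_pos t) _).ne'

theorem gTildeGen_eq_mul_succ (m : ℕ) (t : ℝ) :
    gTildeGen m t = (1 - t + t ^ 2 / 3) * gTildeGen (m + 1) t := by
  rw [gTildeGen, gTildeGen, ← zpow_one_add₀ (one_sub_add_sq_div_three_pos t).ne']
  congr 1

theorem hasDerivAt_gTildeGen (m : ℕ) (t : ℝ) :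
    HasDerivAt (gTildeGen m) ((m + 1) * (1 - 2 * t / 3) * gTildeGen (m + 1) t) t := by
  have hq : HasDerivAt (fun t : ℝ => 1 - t + t ^ 2 / 3) (-1 + 2 * t / 3) t :=
    (((hasDerivAt_id' t).const_sub 1).add ((hasDerivAt_pow 2 t).div_const 3)).congr_deriv
      (by ring)
  have h : HasDerivAt ((· ^ (-(m + 1 : ℤ))) ∘ fun t : ℝ => 1 - t + t ^ 2 / 3) _ t :=
    (hasDerivAt_zpow (-(m + 1 : ℤ)) _
      (Or.inl (one_sub_add_sq_div_three_pos t).ne')).comp t hq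
  refine h.congr_deriv ?_
  rw [gTildeGen, show -(m + 1 : ℤ) - 1 = -((m + 1 : ℕ) + 1 : ℤ) by push_cast; ring]
  push_cast
  ring

theorem mul_one_sub_sq_mul_gTildeGen_succ (m : ℕ) (t : ℝ) :
    (m + 1) * ((1 - t) ^ 2 * gTildeGen (m + 1) t)
      = (m + 1) * gTildeGen m t - t * deriv (gTildeGen m) t := by
  rw [(hasDerivAt_gTildeGen m t).deriv, gTildeGen_eq_mul_succ m t]
  ring

theorem gTilde_eq_taylorCoeff (m k : ℕ) : gTilde m k = taylorCoeff (gTildeGen m) k := rfl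

theorem gTilde_zero (m : ℕ) : gTilde m 0 = 1 := by
  simp [gTilde]

theorem gTilde_one (m : ℕ) : gTilde m 1 = m + 1 := by
  rw [gTilde_eq_taylorCoeff, taylorCoeff, iteratedDeriv_one, (hasDerivAt_gTildeGen m 0).deriv]
  simp [gTildeGen]

theorem gTilde_succ_rec (m k : ℕ) :
    (m + 1) * (gTilde (m + 1) (k + 2) - 2 * gTilde (m + 1) (k + 1) + gTilde (m + 1) k)
      = ((m : ℝ) + 1 - (k + 2)) * gTilde m (k + 2) := by
  set F := gTildeGen (m + 1)
  have hF : ∀ n : ℕ, ContDiff ℝ n F := fun _ => (contDiff_gTildeGen _).of_le le_top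
  have hf : ∀ n : ℕ, ContDiff ℝ n (gTildeGen m) := fun _ =>
    (contDiff_gTildeGen _).of_le le_top
  have hode : taylorCoeff (fun t => (m + 1) * (F t - 2 * (t * F t) + t * (t * F t))) (k + 2)
      = taylorCoeff (fun t => (m + 1) * gTildeGen m t - t * deriv (gTildeGen m) t) (k + 2) := by
    congr 1
    funext t
    rw [← mul_one_sub_sq_mul_gTildeGen_succ]
    ring
  rw [taylorCoeff_const_mul, taylorCoeff_fun_add (by fun_prop) (by fun_prop),
    taylorCoeff_fun_sub (by fun_prop) (by fun_prop), taylorCoeff_const_mul,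
    taylorCoeff_id_mul_succ (by fun_prop), taylorCoeff_id_mul_succ (by fun_prop),
    taylorCoeff_id_mul_succ (by fun_prop), taylorCoeff_fun_sub (by fun_prop) (by fun_prop),
    taylorCoeff_const_mul, taylorCoeff_id_mul_succ (by fun_prop), taylorCoeff_deriv] at hode
  simp only [gTilde_eq_taylorCoeff]
  push_cast at hode
  linear_combination hode

theorem iterate_derivative_X_pow_succ_succ (m k : ℕ) :
    derivative^[k + 1] (X ^ (m + 1) : ℝ[X]) = C ((m : ℝ) + 1) * derivative^[k] (X ^ m) := by
  rw [Function.iterate_succ_apply, derivative_X_pow, ← iterate_derivative_C_mul]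
  push_cast
  rfl

theorem C_mul_iterate_derivative_X_pow_succ (m k : ℕ) :
    C ((m : ℝ) + 1 - k) * derivative^[k] (X ^ (m + 1) : ℝ[X])
      = C ((m : ℝ) + 1) * (X * derivative^[k] (X ^ m)) := by
  induction k with
  | zero => simp [pow_succ']
  | succ k ih =>
    have h := congrArg derivative ih
    simp only [derivative_mul, derivative_C, derivative_X, zero_mul, zero_add, one_mul,
      ← Function.iterate_succ_apply' derivative] at h
    have hC : C ((m : ℝ) + 1 - (k + 1 : ℕ)) = C ((m : ℝ) + 1 - k) - 1 := by
      rw [← C_1, ← C_sub]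
      push_cast
      ring_nf
    rw [hC]
    linear_combination h - iterate_derivative_X_pow_succ_succ m k

noncomputable def airyTerm (n m : ℕ) : ℝ[X] :=
  if 2 * m ≤ n then C (gTilde m (n - 2 * m)) * derivative^[n - 2 * m] (X ^ m) else 0

noncomputable def airySum (n : ℕ) : ℝ[X] := ∑ m ∈ Finset.range (n + 1), airyTerm n m

theorem airyTerm_of_lt {n m : ℕ} (h : n < 2 * m) : airyTerm n m = 0 := by
  rw [airyTerm, if_neg (by omega)]

theorem airyTerm_two_mul_add (m k : ℕ) :
    airyTerm (2 * m + k) m = C (gTilde m k) * derivative^[k] (X ^ m) := by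
  rw [airyTerm, if_pos (by omega), Nat.add_sub_cancel_left]

theorem airyTerm_zero_rec (n : ℕ) :
    airyTerm (n + 2) 0 - 2 * derivative (airyTerm (n + 1) 0)
      + derivative (derivative (airyTerm n 0)) = 0 := by
  simp [airyTerm, ← Function.iterate_succ_apply' derivative, iterate_derivative_one]

theorem airyTerm_succ_rec (n m : ℕ) :
    airyTerm (n + 2) (m + 1) - 2 * derivative (airyTerm (n + 1) (m + 1))
      + derivative (derivative (airyTerm n (m + 1))) = X * airyTerm n m := by
  rcases lt_or_ge n (2 * m) with h | h
  · rw [airyTerm_of_lt (by omega : n + 2 < 2 * (m + 1)),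
      airyTerm_of_lt (by omega : n + 1 < 2 * (m + 1)),
      airyTerm_of_lt (by omega : n < 2 * (m + 1)), airyTerm_of_lt h]
    simp
  obtain ⟨k, rfl⟩ : ∃ k, n = 2 * m + k := ⟨n - 2 * m, by omega⟩
  rw [show 2 * m + k + 2 = 2 * (m + 1) + k by ring, airyTerm_two_mul_add, airyTerm_two_mul_add]
  obtain _ | _ | j := k
  · rw [airyTerm_of_lt (by omega), airyTerm_of_lt (by omega), gTilde_zero, gTilde_zero]
    simp [pow_succ']
  · rw [show 2 * m + (0 + 1) + 1 = 2 * (m + 1) + 0 by ring, airyTerm_two_mul_add,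
      airyTerm_of_lt (by omega), gTilde_zero, gTilde_one, gTilde_one]
    calc _ = C ((m : ℝ) + 1 - (1 : ℕ)) * derivative^[1] (X ^ (m + 1)) := by
          simp only [zero_add, Function.iterate_zero, Function.iterate_one, id, derivative_zero,
            one_mul, add_zero, Nat.cast_add, Nat.cast_one, map_add, map_sub, map_one, map_natCast]
          ring
      _ = _ := by rw [C_mul_iterate_derivative_X_pow_succ]; ring
  · rw [show 2 * m + (j + 1 + 1) + 1 = 2 * (m + 1) + (j + 1) by ring,
      show 2 * m + (j + 1 + 1) = 2 * (m + 1) + j by ring, airyTerm_two_mul_add,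
      airyTerm_two_mul_add]
    simp only [derivative_C_mul, ← Function.iterate_succ_apply' derivative, Nat.succ_eq_add_one]
    refine mul_left_cancel₀ (C_ne_zero.2 (by positivity : (m : ℝ) + 1 ≠ 0)) ?_
    calc _ = C ((m : ℝ) + 1) * C (gTilde (m + 1) (j + 2) - 2 * gTilde (m + 1) (j + 1)
            + gTilde (m + 1) j) * derivative^[j + 2] (X ^ (m + 1)) := by
          simp only [map_add, map_sub, map_mul, map_ofNat]
          ring
      _ = C (gTilde m (j + 2)) * (C ((m : ℝ) + 1 - (j + 2 : ℕ))
            * derivative^[j + 2] (X ^ (m + 1))) := by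
          rw [← C_mul, gTilde_succ_rec, C_mul]
          push_cast
          ring
      _ = _ := by rw [C_mul_iterate_derivative_X_pow_succ]; ring

theorem airySum_eq_sum_range {n B : ℕ} (h : n < B) :
    airySum n = ∑ m ∈ Finset.range B, airyTerm n m :=
  Finset.sum_subset (Finset.range_subset_range.2 h) fun m _ hm =>
    airyTerm_of_lt (by simp at hm; omega)

theorem airySum_succ_succ (n : ℕ) :
    airySum (n + 2) = 2 * derivative (airySum (n + 1)) - derivative (derivative (airySum n))
      + X * airySum n := by
  suffices airySum (n + 2) - 2 * derivative (airySum (n + 1))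
      + derivative (derivative (airySum n)) = X * airySum n by linear_combination this
  calc _ = ∑ m ∈ Finset.range (n + 2 + 1), (airyTerm (n + 2) m
          - 2 * derivative (airyTerm (n + 1) m) + derivative (derivative (airyTerm n m))) := by
        rw [airySum, airySum_eq_sum_range (by omega : n + 1 < n + 3),
          airySum_eq_sum_range (by omega : n < n + 3)]
        simp only [map_sum, Finset.mul_sum, Finset.sum_add_distrib, Finset.sum_sub_distrib]
    _ = ∑ m ∈ Finset.range (n + 2), X * airyTerm n m := by
        simp only [Finset.sum_range_succ' _ (n + 2), airyTerm_zero_rec, airyTerm_succ_rec, add_zero]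
    _ = X * airySum n := by rw [airySum_eq_sum_range (by omega : n < n + 2), Finset.mul_sum]

theorem airyQ_succ_succ_succ (n : ℕ) :
    airyQ (n + 3) = 2 * derivative (airyQ (n + 2)) - derivative (derivative (airyQ (n + 1)))
      + X * airyQ (n + 1) := by
  have hQ : ∀ k, airyQ (k + 1) = airyP k + derivative (airyQ k) := fun _ => rfl
  have hP : ∀ k, airyP (k + 1) = derivative (airyP k) + X * airyQ k := fun _ => rfl
  rw [hQ (n + 2), hP (n + 1), show airyP (n + 1) = airyQ (n + 2) - derivative (airyQ (n + 1)) by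
    rw [hQ (n + 1)]; ring, map_sub]
  ring

theorem airyQ_succ_eq_airySum (n : ℕ) : airyQ (n + 1) = airySum n := by
  induction n using Nat.twoStepInduction with
  | zero => simp [airyQ, airyPQ, airySum, airyTerm, gTilde_zero]
  | one => simp [airyQ, airyPQ, airySum, Finset.sum_range_succ, airyTerm]
  | more n ih₁ ih₂ => rw [airyQ_succ_succ_succ, ih₁, ih₂, airySum_succ_succ]

theorem eval_airyTerm (n m : ℕ) (x : ℝ) :
    (airyTerm n m).eval x = if n ≤ 3 * m ∧ 2 * m ≤ n then
      gTilde m (n - 2 * m) * m.factorial * x ^ (3 * m - n) / (3 * m - n).factorial else 0 := by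
  rcases lt_or_ge n (2 * m) with h₂ | h₂
  · rw [airyTerm_of_lt h₂, if_neg (by omega), eval_zero]
  rw [airyTerm, if_pos h₂, eval_mul, eval_C, iterate_derivative_X_pow_eq_C_mul, eval_mul, eval_C,
    eval_pow, eval_X]
  by_cases h₃ : n ≤ 3 * m
  · rw [if_pos ⟨h₃, h₂⟩, show m - (n - 2 * m) = 3 * m - n by omega,
      ← Nat.factorial_mul_descFactorial (show n - 2 * m ≤ m by omega),
      show m - (n - 2 * m) = 3 * m - n by omega]
    push_cast
    field_simp
  · rw [if_neg (by omega), Nat.descFactorial_eq_zero_iff_lt.2 (by omega)]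
    simp

theorem airyQ_explicit (n : ℕ) (x : ℝ) :
    (airyQ (n + 1)).eval x =
      ∑ m ∈ (Finset.range (n + 1)).filter (fun m => n ≤ 3 * m ∧ 2 * m ≤ n),
        gTilde m (n - 2 * m) * (Nat.factorial m : ℝ) * x ^ (3 * m - n) /
          (Nat.factorial (3 * m - n) : ℝ) := by
  rw [airyQ_succ_eq_airySum, airySum, eval_finsetSum, Finset.sum_filter]
  exact Finset.sum_congr rfl fun m _ => eval_airyTerm n m x
end

section
/- For every natural number n, the terminating hypergeometric sum ∑_{j=0}^{⌊n/2⌋} (−n/2)_j · (−(n−1)/2)_j / ((n+3/2)_j · j!) · (−1/3)^j equals (8/9)^n · (3/2)_n / (4/3)_n. Equivalently, ₂F₁(−n/2, −(n−1)/2; n+3/2 | −1/3) = 6^n · (2/3)_n · (2n+1)!/(3n+1)!. -/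
/-!
By the duplication formula `(-n/2)_j (-(n-1)/2)_j 4^j = n(n-1)⋯(n-2j+1)`, the summand is the
hypergeometric term `t(n, j) = (-1/12)^j n(n-1)⋯(n-2j+1) / ((n+3/2)_j j!)`. Together with a
certificate `G` it forms a Wilf–Zeilberger pair,
`3(3n+4) t(n+1, j) - 4(2n+3) t(n, j) = G(n, j+1) - G(n, j)`, and `G(n, j)` vanishes for large `j`,
so the sums satisfy the first-order recurrence `(n + 4/3) S(n+1) = (8/9)(n + 3/2) S(n)` with
`S(0) = 1`, whose solution is `(8/9)^n (3/2)_n / (4/3)_n`. The second form follows from Gauss's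
multiplication formula, which gives `(2n+1)! = 4^n n! (3/2)_n` and
`(3n+1)! = 27^n n! (2/3)_n (4/3)_n`.
-/

open Polynomial Finset Nat

section Pochhammer

variable {K : Type*} [Field K] [CharZero K]

theorem ascPochhammer_eval_eq_prod_range {R : Type*} [CommSemiring R] (n : ℕ) (r : R) :
    (ascPochhammer R n).eval r = ∏ i ∈ range n, (r + i) := by
  induction n with
  | zero => simp
  | succ n ih => rw [ascPochhammer_succ_eval, ih, prod_range_succ]

theorem ascPochhammer_succ_eval_left {R : Type*} [CommSemiring R] (n : ℕ) (x : R) :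
    (ascPochhammer R (n + 1)).eval x = x * (ascPochhammer R n).eval (x + 1) := by
  simp [ascPochhammer_succ_left]

theorem descPochhammer_succ_eval_left {R : Type*} [CommRing R] (n : ℕ) (x : R) :
    (descPochhammer R (n + 1)).eval x = x * (descPochhammer R n).eval (x - 1) := by
  simp [descPochhammer_succ_left]

theorem ascPochhammer_eval_mul (m j : ℕ) (a : K) :
    (ascPochhammer K (m * j)).eval a =
      (m : K) ^ (m * j) * ∏ i ∈ range m, (ascPochhammer K j).eval ((a + i) / m) := by
  rcases eq_or_ne m 0 with rfl | hm
  · simp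
  have hm' : (m : K) ≠ 0 := Nat.cast_ne_zero.mpr hm
  induction j with
  | zero => simp
  | succ j ih =>
    have hblock : ∏ i ∈ range m, (a + ↑(m * j + i)) =
        (m : K) ^ m * ∏ i ∈ range m, ((a + i) / m + j) := by
      rw [← card_range m, ← prod_const, card_range, ← prod_mul_distrib]
      refine prod_congr rfl fun i _ => ?_
      field_simp
      push_cast
      ring
    rw [mul_add_one, ascPochhammer_eval_eq_prod_range, prod_range_add,
      ← ascPochhammer_eval_eq_prod_range, ih, hblock]
    simp only [ascPochhammer_succ_eval, prod_mul_distrib, pow_add]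
    ring

theorem descPochhammer_eval_two_mul (x : K) (j : ℕ) :
    (descPochhammer K (2 * j)).eval x =
      4 ^ j * (ascPochhammer K j).eval (-x / 2) * (ascPochhammer K j).eval (-(x - 1) / 2) := by
  have h := ascPochhammer_eval_mul 2 j (-x)
  rw [ascPochhammer_eval_neg_eq_descPochhammer, pow_mul, neg_one_sq, one_pow, one_mul] at h
  rw [h, prod_range_succ, prod_range_one, pow_mul]
  norm_num
  ring_nf

theorem ascPochhammer_eval_two {R : Type*} [Semiring R] (n : ℕ) :
    (ascPochhammer R n).eval 2 = ((n + 1)! : R) := by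
  simpa [add_comm, one_add_one_eq_two] using factorial_mul_ascPochhammer R 1 n

theorem cast_factorial_two_mul_add_one (n : ℕ) :
    ((2 * n + 1)! : K) = 4 ^ n * n ! * (ascPochhammer K n).eval (3 / 2) := by
  rw [← ascPochhammer_eval_two, ascPochhammer_eval_mul, prod_range_succ, prod_range_one, pow_mul]
  norm_num
  ring

theorem cast_factorial_three_mul_add_one (n : ℕ) :
    ((3 * n + 1)! : K) =
      27 ^ n * n ! * (ascPochhammer K n).eval (2 / 3) * (ascPochhammer K n).eval (4 / 3) := by
  rw [← ascPochhammer_eval_two, ascPochhammer_eval_mul, prod_range_succ, prod_range_succ,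
    prod_range_one, pow_mul]
  norm_num
  ring

theorem mul_ascPochhammer_eval_of_recurrence {R : Type*} [CommRing R] (u : ℕ → R) (a b c : R)
    (h0 : u 0 = 1) (hu : ∀ n : ℕ, (b + n) * u (n + 1) = c * (a + n) * u n) (n : ℕ) :
    u n * (ascPochhammer R n).eval b = c ^ n * (ascPochhammer R n).eval a := by
  induction n with
  | zero => simp [h0]
  | succ n ih =>
    rw [ascPochhammer_succ_eval, ascPochhammer_succ_eval]
    linear_combination (ascPochhammer R n).eval b * hu n + c * (a + n) * ih

end Pochhammer

namespace TerminatingTwoFOne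

noncomputable def term (x : ℝ) (j : ℕ) : ℝ :=
  (-1 / 12) ^ j * (descPochhammer ℝ (2 * j)).eval x / ((ascPochhammer ℝ j).eval (x + 3 / 2) * j !)

noncomputable def certificate (x : ℝ) : ℕ → ℝ
  | 0 => 0
  | j + 1 => (-1 / 12) ^ j * (descPochhammer ℝ (2 * j + 1)).eval x /
      ((ascPochhammer ℝ j).eval (x + 5 / 2) * j !)

theorem wz_identity {x : ℝ} (hx : -3 / 2 < x) (j : ℕ) :
    3 * (3 * x + 4) * term (x + 1) j - 4 * (2 * x + 3) * term x j =
      certificate x (j + 1) - certificate x j := by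
  cases j with
  | zero =>
    simp only [term, certificate, mul_zero, pow_zero, descPochhammer_zero, descPochhammer_one,
      ascPochhammer_zero, eval_one, eval_X, factorial_zero, cast_one, mul_one, one_mul, div_one,
      sub_zero, zero_add]
    ring
  | succ k =>
    have hQ : (ascPochhammer ℝ k).eval (x + 5 / 2) ≠ 0 := (ascPochhammer_pos k _ (by linarith)).ne'
    have hxk' : x * 2 + 5 + 2 * k ≠ 0 := by have : (0 : ℝ) ≤ k := k.cast_nonneg; linarith
    have hx'' : x * 2 + 3 ≠ 0 := by linarith
    have hD₁ : (descPochhammer ℝ (2 * (k + 1))).eval (x + 1) =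
        (x + 1) * (descPochhammer ℝ (2 * k + 1)).eval x := by
      rw [mul_add_one, descPochhammer_succ_eval_left, add_sub_cancel_right]
    have hD₂ : (descPochhammer ℝ (2 * (k + 1))).eval x =
        (descPochhammer ℝ (2 * k + 1)).eval x * (x - (2 * k + 1 : ℕ)) :=
      descPochhammer_succ_eval _ _
    have hD₃ : (descPochhammer ℝ (2 * (k + 1) + 1)).eval x =
        (descPochhammer ℝ (2 * k + 1)).eval x * (x - (2 * k + 1 : ℕ)) * (x - (2 * (k + 1) : ℕ)) := by
      rw [descPochhammer_succ_eval, hD₂]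
    have hQ₁ : (ascPochhammer ℝ (k + 1)).eval (x + 5 / 2) =
        (ascPochhammer ℝ k).eval (x + 5 / 2) * (x + 5 / 2 + k) :=
      ascPochhammer_succ_eval _ _
    have hQ₂ : (ascPochhammer ℝ (k + 1)).eval (x + 1 + 3 / 2) =
        (ascPochhammer ℝ k).eval (x + 5 / 2) * (x + 5 / 2 + k) := by
      rw [← hQ₁]; norm_num [add_assoc]
    have hQ₃ : (ascPochhammer ℝ (k + 1)).eval (x + 3 / 2) =
        (x + 3 / 2) * (ascPochhammer ℝ k).eval (x + 5 / 2) := by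
      rw [ascPochhammer_succ_eval_left]; norm_num [add_assoc]
    simp only [term, certificate, hD₁, hD₂, hD₃, hQ₁, hQ₂, hQ₃, factorial_succ]
    generalize (descPochhammer ℝ (2 * k + 1)).eval x = D at *
    generalize (ascPochhammer ℝ k).eval (x + 5 / 2) = Q at *
    push_cast
    field_simp
    ring

theorem summand_eq_term (x : ℝ) (j : ℕ) :
    (ascPochhammer ℝ j).eval (-x / 2) * (ascPochhammer ℝ j).eval (-(x - 1) / 2) /
        ((ascPochhammer ℝ j).eval (x + 3 / 2) * j !) * (-1 / 3) ^ j = term x j := by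
  rw [term, descPochhammer_eval_two_mul, show (-1 / 3 : ℝ) = -1 / 12 * 4 by norm_num, mul_pow]
  ring

theorem term_eq_zero {n j : ℕ} (h : n < 2 * j) : term n j = 0 := by
  simp [term, descPochhammer_eval_coe_nat_of_lt h]

theorem sum_range_term_of_lt (n N : ℕ) (h : n / 2 < N) :
    ∑ j ∈ range N, term n j = ∑ j ∈ range (n / 2 + 1), term n j := by
  refine (sum_subset (range_subset_range.mpr (by omega)) fun j _ hj => term_eq_zero ?_).symm
  rw [mem_range] at hj
  omega

theorem certificate_succ_eq_zero {n j : ℕ} (h : n < 2 * j + 1) : certificate n (j + 1) = 0 := by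
  simp [certificate, descPochhammer_eval_coe_nat_of_lt h]

theorem sum_term_succ (n : ℕ) :
    3 * (3 * n + 4) * ∑ j ∈ range ((n + 1) / 2 + 1), term (n + 1 : ℕ) j =
      4 * (2 * n + 3) * ∑ j ∈ range (n / 2 + 1), term n j := by
  have hn : -3 / 2 < (n : ℝ) := by linarith [(n.cast_nonneg : (0 : ℝ) ≤ n)]
  have htelescope := sum_range_sub (certificate n) (n + 2)
  rw [certificate_succ_eq_zero (by omega), certificate, sub_zero,
    ← sum_congr rfl fun j _ => wz_identity hn j, sum_sub_distrib, ← mul_sum, ← mul_sum,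
    sub_eq_zero] at htelescope
  rw [← sum_range_term_of_lt n (n + 2) (by omega),
    ← sum_range_term_of_lt (n + 1) (n + 2) (by omega), ← htelescope]
  push_cast
  ring

theorem sum_term_mul_ascPochhammer_eval (n : ℕ) :
    (∑ j ∈ range (n / 2 + 1), term n j) * (ascPochhammer ℝ n).eval (4 / 3) =
      (8 / 9) ^ n * (ascPochhammer ℝ n).eval (3 / 2) := by
  refine mul_ascPochhammer_eval_of_recurrence (fun n => ∑ j ∈ range (n / 2 + 1), term n j)
    _ _ _ (by simp [term]) (fun n => ?_) n
  linear_combination sum_term_succ n / 9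

end TerminatingTwoFOne

theorem terminating_2F1_special_value (n : ℕ) :
    ∑ j ∈ Finset.range (n / 2 + 1),
        (ascPochhammer ℝ j).eval (-(n : ℝ) / 2) *
          (ascPochhammer ℝ j).eval (-((n : ℝ) - 1) / 2) /
          ((ascPochhammer ℝ j).eval ((n : ℝ) + 3 / 2) * (Nat.factorial j : ℝ)) *
          (-1 / 3 : ℝ) ^ j
      = (8 / 9 : ℝ) ^ n * (ascPochhammer ℝ n).eval (3 / 2 : ℝ) /
          (ascPochhammer ℝ n).eval (4 / 3 : ℝ)
    ∧ ∑ j ∈ Finset.range (n / 2 + 1),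
        (ascPochhammer ℝ j).eval (-(n : ℝ) / 2) *
          (ascPochhammer ℝ j).eval (-((n : ℝ) - 1) / 2) /
          ((ascPochhammer ℝ j).eval ((n : ℝ) + 3 / 2) * (Nat.factorial j : ℝ)) *
          (-1 / 3 : ℝ) ^ j
      = 6 ^ n * (ascPochhammer ℝ n).eval (2 / 3 : ℝ) *
          (Nat.factorial (2 * n + 1) : ℝ) / (Nat.factorial (3 * n + 1) : ℝ) := by
  simp only [TerminatingTwoFOne.summand_eq_term]
  have h43 : (ascPochhammer ℝ n).eval (4 / 3) ≠ 0 := (ascPochhammer_pos n _ (by norm_num)).ne'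
  have hclosed := TerminatingTwoFOne.sum_term_mul_ascPochhammer_eval n
  refine ⟨eq_div_of_mul_eq h43 hclosed, ?_⟩
  rw [eq_div_iff (by positivity), cast_factorial_two_mul_add_one, cast_factorial_three_mul_add_one]
  have hpow : (27 : ℝ) ^ n * (8 / 9) ^ n = 6 ^ n * 4 ^ n := by
    rw [← mul_pow, ← mul_pow]; norm_num
  linear_combination (27 ^ n * n ! * (ascPochhammer ℝ n).eval (2 / 3)) * hclosed
    + (n ! * (ascPochhammer ℝ n).eval (2 / 3) * (ascPochhammer ℝ n).eval (3 / 2)) * hpow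
end

section
/- The polynomials P_n and Q_n each satisfy the third-order difference equation Y_{n+3}(x) = x·Y_{n+1}(x) + (n+1)·Y_n(x) for all n ≥ 0 and all real x. -/
open Polynomial

lemma airyP_succ (n : ℕ) : airyP (n + 1) = (airyP n).derivative + X * airyQ n := rfl
lemma airyQ_succ (n : ℕ) : airyQ (n + 1) = airyP n + (airyQ n).derivative := rfl

lemma airy_key : ∀ n : ℕ,
    airyP (n + 3) = X * airyP (n + 1) + ((n : Polynomial ℝ) + 1) * airyP n ∧
    airyQ (n + 3) = X * airyQ (n + 1) + ((n : Polynomial ℝ) + 1) * airyQ n := by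
  intro n
  induction n with
  | zero =>
      constructor <;>
        simp [airyP, airyQ, airyPQ, derivative_mul]
  | succ n ih =>
      obtain ⟨hP, hQ⟩ := ih
      have e1 : airyP (n + 1 + 3) = (airyP (n + 3)).derivative + X * airyQ (n + 3) := rfl
      have e2 : airyQ (n + 1 + 3) = airyP (n + 3) + (airyQ (n + 3)).derivative := rfl
      constructor
      · rw [e1, hP, hQ]
        simp only [derivative_add, derivative_mul, derivative_X, derivative_natCast,
          derivative_one, airyP_succ, airyQ_succ]
        push_cast
        ring
      · rw [e2, hP, hQ]
        simp only [derivative_add, derivative_mul, derivative_X, derivative_natCast,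
          derivative_one, airyP_succ, airyQ_succ]
        push_cast
        ring

theorem airyPQ_third_order_difference_equation :
    ∀ (n : ℕ) (x : ℝ),
      (airyP (n + 3)).eval x = x * (airyP (n + 1)).eval x + (n + 1 : ℝ) * (airyP n).eval x ∧
      (airyQ (n + 3)).eval x = x * (airyQ (n + 1)).eval x + (n + 1 : ℝ) * (airyQ n).eval x := by
  intro n x
  obtain ⟨hP, hQ⟩ := airy_key n
  constructor
  · rw [hP]; simp
  · rw [hQ]; simp
end

section
/- For every integer m ≥ 0 and every real s, the m-th derivative of the complex function t ↦ (t + e^{πi/6} + s)^{2m} / (t + i)^{m+1} evaluated at t = 0 equals −i · ((2m)!/m!) · (1 + √3·s + s²)^m. In particular its real part is zero. -/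
/-!
Shift `t ↦ u = t + i` and write `t + e^{πi/6} + s = u + d`, with `d = c - i` for `c = e^{πi/6} + s`.
Leibniz' rule applied to `(u + d)^{2m} · u^{-(m+1)}` gives the closed form
`dᵐ/duᵐ [(u + d)^{2m} / u^{m+1}] = ((2m)!/m!) (-d)ᵐ (u + d)ᵐ / u^{2m+1}`:
the factorials in the `k`-th term combine to `(2m)!/m!` independently of `k`, and the remaining
sum is the binomial expansion of `(u - (u + d))ᵐ`. At `u = i` this is `-i ((2m)!/m!) (d c)ᵐ`,
and `d = c̄`, so `d c = |c|² = 1 + √3 s + s²` is real.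
-/

open Complex Finset Nat

theorem Nat.cast_descFactorial_eq_div {K : Type*} [DivisionRing K] [CharZero K] {n k : ℕ}
    (hk : k ≤ n) : (n.descFactorial k : K) = n ! / (n - k)! := by
  rw [eq_div_iff (mod_cast (n - k).factorial_ne_zero), ← Nat.cast_mul, mul_comm,
    factorial_mul_descFactorial hk]

theorem Nat.descFactorial_mul_succ_ascFactorial {m k : ℕ} (hk : k ≤ m) :
    (2 * m).descFactorial k * (m + 1).ascFactorial (m - k) = (2 * m).descFactorial m := by
  refine Nat.eq_of_mul_eq_mul_left m.factorial_pos ?_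
  rw [← mul_assoc, mul_comm (m !), mul_assoc, factorial_mul_ascFactorial,
    show m + (m - k) = 2 * m - k by omega, mul_comm, factorial_mul_descFactorial (by omega),
    ← factorial_mul_descFactorial (show m ≤ 2 * m by omega), show 2 * m - m = m by omega]

section IteratedDeriv

variable {𝕜 : Type*} [NontriviallyNormedField 𝕜]

theorem prod_range_intCast_neg_sub (a k : ℕ) :
    ∏ i ∈ range k, (((-a : ℤ) : 𝕜) - i) = (-1) ^ k * a.ascFactorial k := by
  induction k with
  | zero => simp
  | succ k ih =>
    rw [prod_range_succ, ih, ascFactorial_succ]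
    push_cast
    ring

theorem iteratedDeriv_inv_pow (a k : ℕ) (u : 𝕜) :
    iteratedDeriv k (fun u => (u ^ a)⁻¹) u = (-1) ^ k * a.ascFactorial k / u ^ (a + k) := by
  have hzpow : (fun u : 𝕜 => (u ^ a)⁻¹) = fun u => u ^ (-a : ℤ) := by
    ext u
    rw [zpow_neg, zpow_natCast]
  rw [hzpow, iteratedDeriv_eq_iterate, iter_deriv_zpow, prod_range_intCast_neg_sub,
    show -(a : ℤ) - k = -((a + k : ℕ) : ℤ) by push_cast; ring, zpow_neg, zpow_natCast,
    div_eq_mul_inv]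

theorem iteratedDeriv_add_const_pow (n k : ℕ) (d u : 𝕜) :
    iteratedDeriv k (fun u => (u + d) ^ n) u = n.descFactorial k * (u + d) ^ (n - k) := by
  rw [iteratedDeriv_comp_add_const (f := (· ^ n))]
  exact iteratedDeriv_pow n k

theorem iteratedDeriv_add_const_pow_two_mul_div_pow (m : ℕ) (d : 𝕜) {u : 𝕜} (hu : u ≠ 0) :
    iteratedDeriv m (fun u => (u + d) ^ (2 * m) / u ^ (m + 1)) u
      = (2 * m).descFactorial m * (-d) ^ m * (u + d) ^ m / u ^ (2 * m + 1) := by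
  have hprod : (fun u : 𝕜 => (u + d) ^ (2 * m) / u ^ (m + 1))
      = (fun u => (u + d) ^ (2 * m)) * fun u => (u ^ (m + 1))⁻¹ := by
    ext u
    simp [div_eq_mul_inv]
  have hinv : ContDiffAt 𝕜 m (fun u : 𝕜 => (u ^ (m + 1))⁻¹) u :=
    (contDiffAt_id.pow _).inv (pow_ne_zero _ hu)
  rw [hprod]
  calc _ = ∑ k ∈ range (m + 1), (2 * m).descFactorial m * (u + d) ^ m / u ^ (2 * m + 1)
          * (u ^ k * (-(u + d)) ^ (m - k) * m.choose k) := by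
        rw [iteratedDeriv_mul (by fun_prop) hinv]
        refine sum_congr rfl fun k hk => ?_
        have hkm : k ≤ m := Nat.lt_succ_iff.mp (mem_range.mp hk)
        rw [iteratedDeriv_add_const_pow, iteratedDeriv_inv_pow,
          ← Nat.descFactorial_mul_succ_ascFactorial hkm, neg_pow (u + d),
          show 2 * m - k = m + (m - k) by omega, show 2 * m + 1 = m + 1 + (m - k) + k by omega]
        field_simp
        push_cast
        ring
    _ = _ := by
        rw [← mul_sum, ← add_pow, show u + -(u + d) = -d by ring]
        ring

theorem iteratedDeriv_add_pow_two_mul_div_add_pow (m : ℕ) (a c : 𝕜) {t : 𝕜} (ht : t + a ≠ 0) :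
    iteratedDeriv m (fun t => (t + c) ^ (2 * m) / (t + a) ^ (m + 1)) t
      = (2 * m).descFactorial m * (a - c) ^ m * (t + c) ^ m / (t + a) ^ (2 * m + 1) := by
  have hshift := congrFun
    (iteratedDeriv_comp_add_const m (fun u => (u + (c - a)) ^ (2 * m) / u ^ (m + 1)) a) t
  simp only [show ∀ u, u + a + (c - a) = u + c by intro u; ring] at hshift
  rw [hshift, iteratedDeriv_add_const_pow_two_mul_div_pow m (c - a) ht, neg_sub,
    show t + a + (c - a) = t + c by ring]

end IteratedDeriv

theorem Complex.exp_pi_mul_I_div_six :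
    exp (Real.pi * I / 6) = ((Real.sqrt 3 : ℝ) + I) / 2 := by
  rw [show (Real.pi : ℂ) * I / 6 = ((Real.pi / 6 : ℝ) : ℂ) * I by push_cast; ring, exp_mul_I,
    ← ofReal_cos, ← ofReal_sin, Real.cos_pi_div_six, Real.sin_pi_div_six]
  push_cast
  ring

theorem airy_generating_derivative_value (m : ℕ) (s : ℝ) :
    iteratedDeriv m
        (fun t : ℂ => (t + Complex.exp (Real.pi * Complex.I / 6) + (s : ℂ)) ^ (2 * m) /
          (t + Complex.I) ^ (m + 1)) 0
      = -Complex.I * ((Nat.factorial (2 * m) : ℂ) / (Nat.factorial m : ℂ)) *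
          ((1 : ℂ) + (Real.sqrt 3 : ℝ) * (s : ℂ) + (s : ℂ) ^ 2) ^ m ∧
    (iteratedDeriv m
        (fun t : ℂ => (t + Complex.exp (Real.pi * Complex.I / 6) + (s : ℂ)) ^ (2 * m) /
          (t + Complex.I) ^ (m + 1)) 0).re = 0 := by
  set c : ℂ := exp (Real.pi * I / 6) + s
  have hfun : (fun t : ℂ => (t + exp (Real.pi * I / 6) + s) ^ (2 * m) / (t + I) ^ (m + 1))
      = fun t => (t + c) ^ (2 * m) / (t + I) ^ (m + 1) := by
    simp only [c, add_assoc]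
  have hbase : (c - I) * c = 1 + (Real.sqrt 3 : ℂ) * s + s ^ 2 := by
    have h3 : ((Real.sqrt 3 : ℝ) : ℂ) ^ 2 = 3 := mod_cast Real.sq_sqrt (by norm_num)
    simp only [c, exp_pi_mul_I_div_six]
    linear_combination (1 / 4 : ℂ) * h3 - (1 / 4 : ℂ) * I_sq
  have hvalue : iteratedDeriv m (fun t : ℂ => (t + c) ^ (2 * m) / (t + I) ^ (m + 1)) 0
      = ((2 * m)! / m ! * (1 + Real.sqrt 3 * s + s ^ 2 : ℝ) ^ m : ℝ) * -I := by
    rw [iteratedDeriv_add_pow_two_mul_div_add_pow m I c (by simp),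
      Nat.cast_descFactorial_eq_div (by omega), show 2 * m - m = m by omega, zero_add, zero_add,
      pow_succ, pow_mul, I_sq, ← neg_sub, neg_pow, div_eq_iff (by simp)]
    push_cast
    rw [← hbase, mul_pow]
    linear_combination ((2 * m)! / m ! * (c - I) ^ m * c ^ m * (-1) ^ m : ℂ) * I_sq
  rw [hfun, hvalue]
  exact ⟨by push_cast; ring, by rw [re_ofReal_mul]; simp⟩
end

section
/- Let f : ℂ → ℂ be continuous on the closed half-plane {z : Re z ≥ 0} and holomorphic on the open half-plane {z : Re z > 0}, and suppose there exist constants C > 0 and c < 3π with |f(z)| ≤ C·e^{c|z|} for all z with Re z ≥ 0. Let 0 < a < b < 1 and suppose f(n) = f(n+a) = f(n+b) = 0 for every natural number n ≥ 0. Then f vanishes identically on {z : Re z ≥ 0}. -/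
/-!
Let `g z = f (z + 1)`, holomorphic on `Re z > -1`, and
`P z = sin (π z) sin (π (z - a)) sin (π (z - b))`, whose zeros are simple and are zeros of `g`.
With `c ≥ 0`, `F z = exp (-c z) g z / P z` is holomorphic on `Re z > -1`. As
`|P z| ≥ exp (3π |Im z|) / 64` for `|Im z| ≥ 1` and `|P|` is bounded below on the lines
`Re z = n + a / 2`, the maximum principle on rectangles gives
`|F z| ≤ B exp (-μ |Im z|)` on the closed right half-plane, with `μ = 3π - c > 0`.

Such an `F` vanishes. Phragmén–Lindelöf on the sector `|Im z| ≤ Re z` improves the bound to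
`|F z| ≤ B exp (-μ Re z)`, so `exp (μ z) F` is bounded by `B`; since `exp (μ z)` has modulus one on
the imaginary axis, Phragmén–Lindelöf on the quadrants gives it the decay `B exp (-μ |Im z|)` back.
Iterating, `exp (n μ Re z) |F z| ≤ B` for all `n`, so `F = 0`. Then `g = 0` by the identity theorem,
and `f = 0` on the closed half-plane by continuity.
-/

open Complex Set Filter Asymptotics Bornology Topology
open scoped Real

lemma exists_growth_lt_two_of_norm_le_mul_exp {S : Set ℂ} {G : ℂ → ℂ} {A ν : ℝ}
    (h : ∀ z ∈ S, ‖G z‖ ≤ A * Real.exp (ν * ‖z‖)) :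
    ∃ c < (2 : ℝ), ∃ B, G =O[cobounded ℂ ⊓ 𝓟 S] fun z => Real.exp (B * ‖z‖ ^ c) := by
  refine ⟨1, one_lt_two, ν, .of_bound A ?_⟩
  filter_upwards [mem_inf_of_right (mem_principal_self S)] with z hz
  simpa [Real.rpow_one, Real.abs_exp] using h z hz

lemma norm_le_mul_exp_neg_im_of_im_nonneg {G : ℂ → ℂ} (hG : DiffContOnCl ℂ G {z | 0 < z.re})
    {B μ : ℝ} (hbound : ∀ z, 0 ≤ z.re → ‖G z‖ ≤ B)
    (himag : ∀ y : ℝ, 0 ≤ y → ‖G (y * I)‖ ≤ B * Real.exp (-(μ * y)))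
    {z : ℂ} (hz : 0 ≤ z.re) (hz' : 0 ≤ z.im) : ‖G z‖ ≤ B * Real.exp (-(μ * z.im)) := by
  set Φ : ℂ → ℂ := fun w => exp (-(μ * I * w)) * G w
  have hΦ : ∀ w, ‖Φ w‖ = Real.exp (μ * w.im) * ‖G w‖ := fun w => by simp [Φ, norm_exp]
  have key : ‖Φ z‖ ≤ B := by
    refine PhragmenLindelof.quadrant_I ?_ ?_ (fun x hx => ?_) (fun y hy => ?_) hz hz'
    · exact (Differentiable.diffContOnCl (f := fun w => exp (-(μ * I * w))) (by fun_prop)).smul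
        (hG.mono fun w (hw : w ∈ Ioi 0 ×ℂ Ioi 0) => hw.1)
    · refine exists_growth_lt_two_of_norm_le_mul_exp (A := B) (ν := |μ|) fun w hw => ?_
      rw [hΦ, mul_comm]
      gcongr
      exacts [(norm_nonneg _).trans (hbound 0 le_rfl), hbound w hw.1.le, hw.2.le, le_abs_self μ,
        im_le_norm w]
    · simpa [hΦ] using hbound x (by simpa)
    · calc ‖Φ (y * I)‖ ≤ Real.exp (μ * y) * (B * Real.exp (-(μ * y))) := by
            simpa [hΦ] using mul_le_mul_of_nonneg_left (himag y hy) (Real.exp_pos (μ * y)).le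
        _ = B := by rw [mul_left_comm, ← Real.exp_add, add_neg_cancel, Real.exp_zero, mul_one]
  rwa [Real.exp_neg, ← div_eq_mul_inv, le_div_iff₀ (Real.exp_pos _), mul_comm, ← hΦ]

open ComplexConjugate in
lemma DiffContOnCl.conj_conj_right_half_plane {G : ℂ → ℂ} (hG : DiffContOnCl ℂ G {z | 0 < z.re}) :
    DiffContOnCl ℂ (conj ∘ G ∘ conj) {z | 0 < z.re} := by
  have hopen : IsOpen {z : ℂ | 0 < z.re} := isOpen_lt continuous_const continuous_re
  refine ⟨fun w hw => ?_, ?_⟩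
  · exact (differentiableAt_conj_conj_iff.2
      (hG.differentiableAt hopen (by simpa using hw))).differentiableWithinAt
  · refine continuous_conj.comp_continuousOn (hG.continuousOn.comp continuous_conj.continuousOn ?_)
    intro w hw
    simpa [closure_setOfPred_lt_re] using hw

open ComplexConjugate in
lemma norm_le_mul_exp_neg_abs_im {G : ℂ → ℂ} (hG : DiffContOnCl ℂ G {z | 0 < z.re})
    {B μ : ℝ} (hbound : ∀ z, 0 ≤ z.re → ‖G z‖ ≤ B)
    (himag : ∀ y : ℝ, ‖G (y * I)‖ ≤ B * Real.exp (-(μ * |y|)))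
    {z : ℂ} (hz : 0 ≤ z.re) : ‖G z‖ ≤ B * Real.exp (-(μ * |z.im|)) := by
  rcases le_total 0 z.im with h | h
  · rw [abs_of_nonneg h]
    refine norm_le_mul_exp_neg_im_of_im_nonneg hG hbound (fun y hy => ?_) hz h
    simpa [abs_of_nonneg hy] using himag y
  · have := norm_le_mul_exp_neg_im_of_im_nonneg hG.conj_conj_right_half_plane
      (fun w hw => by simpa using hbound (conj w) (by simpa using hw)) (fun y hy => ?_)
      (μ := μ) (z := conj z) (by simpa using hz) (by simpa using h)
    · simpa [abs_of_nonpos h] using this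
    · simpa [abs_of_nonneg hy] using himag (-y)

lemma norm_le_mul_exp_neg_re_of_abs_im_le {G : ℂ → ℂ} (hG : DiffContOnCl ℂ G {z | 0 < z.re})
    {B μ : ℝ} (hμ : 0 ≤ μ) (hB : ∀ z, 0 ≤ z.re → ‖G z‖ ≤ B * Real.exp (-(μ * |z.im|)))
    {z : ℂ} (hz : |z.im| ≤ z.re) : ‖G z‖ ≤ B * Real.exp (-(μ * z.re)) := by
  have hB₀ : 0 ≤ B := by simpa using (norm_nonneg _).trans (hB 0 le_rfl)
  have hbdd : ∀ v, 0 ≤ v.re → ‖G v‖ ≤ B := fun v hv => (hB v hv).trans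
    (mul_le_of_le_one_right hB₀ (Real.exp_le_one_iff.2 (neg_nonpos.2 (by positivity))))
  -- the sector `|Im z| ≤ Re z` is the image of the first quadrant under `w ↦ (1 - I) * w`
  set Φ : ℂ → ℂ := fun w => exp (μ * ((1 - I) * w)) * G ((1 - I) * w)
  have hre : ∀ w : ℂ, ((1 - I) * w).re = w.re + w.im := by simp
  have hΦ : ∀ w, ‖Φ w‖ = Real.exp (μ * (w.re + w.im)) * ‖G ((1 - I) * w)‖ := by
    simp [Φ, norm_exp, hre]
  have hdiag : ∀ w : ℂ, |((1 - I) * w).im| = w.re + w.im → 0 ≤ w.re + w.im → ‖Φ w‖ ≤ B := by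
    intro w hw hw₀
    calc ‖Φ w‖ ≤ Real.exp (μ * (w.re + w.im)) * (B * Real.exp (-(μ * (w.re + w.im)))) := by
          rw [hΦ, ← hw]; gcongr; exact hB _ (by rwa [hre])
      _ = B := by rw [mul_left_comm, ← Real.exp_add, add_neg_cancel, Real.exp_zero, mul_one]
  have hquad : ∀ w : ℂ, 0 ≤ w.re → 0 ≤ w.im → ‖Φ w‖ ≤ B := by
    intro w hw hw'
    refine PhragmenLindelof.quadrant_I ?_ ?_ (fun x hx => ?_) (fun y hy => ?_) hw hw'
    · refine (Differentiable.diffContOnCl (f := fun w => exp (μ * ((1 - I) * w)))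
        (by fun_prop)).smul (hG.comp (Differentiable.diffContOnCl (by fun_prop)) ?_)
      intro u (hu : u ∈ Ioi 0 ×ℂ Ioi 0)
      simp only [mem_ofPred_eq, hre]
      exact add_pos hu.1 hu.2
    · refine exists_growth_lt_two_of_norm_le_mul_exp (A := B) (ν := 2 * μ) fun u hu => ?_
      have hu₀ : 0 ≤ ((1 - I) * u).re := by rw [hre]; exact add_nonneg hu.1.le hu.2.le
      rw [hΦ, mul_comm]
      exact mul_le_mul (hbdd _ hu₀) (Real.exp_le_exp.2 (by nlinarith [re_le_norm u, im_le_norm u]))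
        (Real.exp_pos _).le hB₀
    · exact hdiag x (by simp [abs_of_nonneg hx]) (by simpa using hx)
    · exact hdiag (y * I) (by simp [abs_of_nonneg hy]) (by simpa using hy)
  have hz' : (1 - I) * ((1 + I) * z / 2) = z := by
    ring_nf; rw [I_sq]; ring
  have := hquad ((1 + I) * z / 2) (by simp; linarith [le_abs_self z.im])
    (by simp; linarith [neg_abs_le z.im])
  rw [hΦ, hz', ← hre, hz'] at this
  rwa [Real.exp_neg, ← div_eq_mul_inv, le_div_iff₀ (Real.exp_pos _), mul_comm]

lemma norm_le_mul_exp_neg_re {G : ℂ → ℂ} (hG : DiffContOnCl ℂ G {z | 0 < z.re}) {B μ : ℝ}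
    (hμ : 0 ≤ μ) (hB : ∀ z, 0 ≤ z.re → ‖G z‖ ≤ B * Real.exp (-(μ * |z.im|)))
    {z : ℂ} (hz : 0 ≤ z.re) : ‖G z‖ ≤ B * Real.exp (-(μ * z.re)) := by
  have hB₀ : 0 ≤ B := by simpa using (norm_nonneg _).trans (hB 0 le_rfl)
  rcases le_total z.re |z.im| with h | h
  · exact (hB z hz).trans (by gcongr)
  · exact norm_le_mul_exp_neg_re_of_abs_im_le hG hμ hB h

theorem eqOn_zero_of_norm_le_mul_exp_neg_abs_im {G : ℂ → ℂ}
    (hG : DiffContOnCl ℂ G {z | 0 < z.re}) {B μ : ℝ} (hμ : 0 < μ)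
    (hB : ∀ z, 0 ≤ z.re → ‖G z‖ ≤ B * Real.exp (-(μ * |z.im|))) :
    EqOn G 0 {z | 0 ≤ z.re} := by
  set Gn : ℕ → ℂ → ℂ := fun n z => exp (μ * z) ^ n * G z
  have hnorm : ∀ n z, ‖Gn n z‖ = Real.exp (μ * z.re) ^ n * ‖G z‖ := by simp [Gn, norm_exp]
  have hGn : ∀ n, DiffContOnCl ℂ (Gn n) {z | 0 < z.re} := fun n =>
    (Differentiable.diffContOnCl (f := fun z => exp (μ * z) ^ n) (by fun_prop)).smul hG
  have hiter : ∀ n z, 0 ≤ z.re → ‖Gn n z‖ ≤ B * Real.exp (-(μ * |z.im|)) := by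
    intro n
    induction n with
    | zero => simpa [Gn] using hB
    | succ n ih =>
      intro z hz
      refine norm_le_mul_exp_neg_abs_im (hGn (n + 1)) (fun w hw => ?_) (fun y => ?_) hz
      · calc ‖Gn (n + 1) w‖ = Real.exp (μ * w.re) * ‖Gn n w‖ := by
              rw [hnorm, hnorm, pow_succ]; ring
          _ ≤ Real.exp (μ * w.re) * (B * Real.exp (-(μ * w.re))) := by
              gcongr; exact norm_le_mul_exp_neg_re (hGn n) hμ.le ih hw
          _ = B := by rw [mul_left_comm, ← Real.exp_add, add_neg_cancel, Real.exp_zero, mul_one]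
      · simpa [hnorm] using ih (y * I) (by simp)
  have hpos : EqOn G 0 {z | 0 < z.re} := by
    intro z (hz : 0 < z.re)
    by_contra hne
    obtain ⟨n, hn⟩ := (((tendsto_pow_atTop_atTop_of_one_lt
      (Real.one_lt_exp_iff.2 (mul_pos hμ hz))).atTop_mul_const (norm_pos_iff.2 hne)).eventually
      (eventually_gt_atTop B)).exists
    have := (hiter n z hz.le).trans (mul_le_of_le_one_right
      (by simpa using (norm_nonneg _).trans (hB 0 le_rfl))
      (Real.exp_le_one_iff.2 (neg_nonpos.2 (by positivity))))
    rw [hnorm] at this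
    linarith
  simpa only [closure_setOfPred_lt_re] using
    EqOn.of_subset_closure hpos hG.continuousOn continuousOn_const subset_closure Subset.rfl

lemma norm_le_of_half_strip {G : ℂ → ℂ} (hG : DiffContOnCl ℂ G {z | 0 < z.re}) {h M : ℝ}
    (hleft : ∀ y : ℝ, |y| ≤ h → ‖G (y * I)‖ ≤ M)
    (hedge : ∀ z : ℂ, 0 ≤ z.re → |z.im| = h → ‖G z‖ ≤ M)
    (hcut : ∀ t, 0 ≤ t → ∃ T, t < T ∧ ∀ z : ℂ, z.re = T → |z.im| ≤ h → ‖G z‖ ≤ M)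
    {z : ℂ} (hz : 0 ≤ z.re) (hzh : |z.im| ≤ h) : ‖G z‖ ≤ M := by
  rcases hzh.eq_or_lt with hzh | hzh
  · exact hedge z hz hzh
  obtain ⟨T, hT, hcutT⟩ := hcut z.re hz
  have hh₀ : 0 < h := (abs_nonneg _).trans_lt hzh
  have hh : -h < h := by linarith
  have hT₀ : 0 < T := hz.trans_lt hT
  refine norm_le_of_forall_mem_frontier_norm_le
    ((Metric.isBounded_Ioo 0 T).reProdIm (Metric.isBounded_Ioo (-h) h))
    (hG.mono fun w (hw : w ∈ Ioo 0 T ×ℂ Ioo (-h) h) => hw.1.1) (fun w hw => ?_) ?_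
  · rw [frontier_reProdIm, closure_Ioo hT₀.ne, closure_Ioo hh.ne, frontier_Ioo hh,
      frontier_Ioo hT₀] at hw
    rcases hw with ⟨hre, him⟩ | ⟨hre, him⟩
    · refine hedge w hre.1 ?_
      rcases him with him | him <;> simp_all [abs_of_pos hh₀]
    · have him' : |w.im| ≤ h := abs_le.2 him
      rcases hre with hre | hre
      · have hw : w = w.im * I := by apply Complex.ext <;> simp [hre]
        rw [hw]; exact hleft _ him'
      · exact hcutT w hre him'
  · rw [closure_reProdIm, closure_Ioo hT₀.ne, closure_Ioo hh.ne]
    exact ⟨⟨hz, hT.le⟩, abs_le.1 hzh.le⟩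

-- At a common zero of `f` and `g` where `deriv g ≠ 0`, `deriv f / deriv g` is the removable value.
noncomputable def patchedDiv (f g : ℂ → ℂ) (z : ℂ) : ℂ :=
  if g z = 0 then deriv f z / deriv g z else f z / g z

lemma patchedDiv_mul_cancel {f g : ℂ → ℂ} {z : ℂ} (h : g z = 0 → f z = 0) :
    patchedDiv f g z * g z = f z := by
  by_cases hg : g z = 0
  · simp [hg, h hg]
  · simp [patchedDiv, hg]

lemma differentiableOn_patchedDiv {f g : ℂ → ℂ} {U : Set ℂ} (hU : IsOpen U)
    (hf : DifferentiableOn ℂ f U) (hg : DifferentiableOn ℂ g U)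
    (hzero : ∀ z ∈ U, g z = 0 → f z = 0 ∧ deriv g z ≠ 0) :
    DifferentiableOn ℂ (patchedDiv f g) U := by
  intro w hw
  have hU : U ∈ 𝓝 w := hU.mem_nhds hw
  refine DifferentiableAt.differentiableWithinAt ?_
  by_cases hgw : g w = 0
  · -- near `w`, `patchedDiv f g = dslope f w / dslope g w`, a quotient of holomorphic functions
    obtain ⟨hfw, hg'w⟩ := hzero w hw hgw
    have hdf := ((differentiableOn_dslope hU).2 hf).differentiableAt hU
    have hdg := ((differentiableOn_dslope hU).2 hg).differentiableAt hU
    have hdgw : dslope g w w ≠ 0 := by rwa [dslope_same]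
    refine (hdf.div hdg hdgw).congr_of_eventuallyEq ?_
    filter_upwards [hdg.continuousAt.eventually_ne hdgw] with z hz
    rcases eq_or_ne z w with rfl | hzw
    · simp [patchedDiv, hgw, dslope_same]
    · have hgz : g z = (z - w) * dslope g w z := by
        simpa [hgw] using (sub_smul_dslope g w z).symm
      have hfz : f z = (z - w) * dslope f w z := by
        simpa [hfw] using (sub_smul_dslope f w z).symm
      have hzw' : z - w ≠ 0 := sub_ne_zero.2 hzw
      simp only [patchedDiv, hgz, mul_eq_zero, hzw', hz, or_self, if_false, hfz]
      exact mul_div_mul_left _ _ hzw'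
  · refine ((hf.differentiableAt hU).div (hg.differentiableAt hU) hgw).congr_of_eventuallyEq ?_
    filter_upwards [(hg.continuousOn.continuousAt hU).eventually_ne hgw] with z hz
    simp [patchedDiv, hz]

lemma deriv_mul_ne_zero_of_eq_zero {𝕜 : Type*} [NontriviallyNormedField 𝕜] {u v : 𝕜 → 𝕜} {z : 𝕜}
    (hu : DifferentiableAt 𝕜 u z) (hv : DifferentiableAt 𝕜 v z) (huv : u z * v z = 0)
    (hu' : u z = 0 → deriv u z ≠ 0) (hv' : v z = 0 → deriv v z ≠ 0) (hdisj : ¬(u z = 0 ∧ v z = 0)) :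
    deriv (u * v) z ≠ 0 := by
  rw [deriv_mul hu hv]
  rcases mul_eq_zero.1 huv with h | h
  · have h' : v z ≠ 0 := fun h' => hdisj ⟨h, h'⟩
    simpa [h] using And.intro (hu' h) h'
  · have h' : u z ≠ 0 := fun h' => hdisj ⟨h', h⟩
    simpa [h] using And.intro h' (hv' h)

lemma Complex.sinh_abs_im_le_norm_sin (w : ℂ) : Real.sinh |w.im| ≤ ‖sin w‖ := by
  have h := abs_norm_sub_norm_le (exp (-w * I)) (exp (w * I))
  simp only [norm_exp, neg_mul, neg_re, mul_re, I_re, mul_zero, I_im, mul_one, zero_sub,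
    neg_neg] at h
  rw [sin, norm_div, norm_mul, norm_I, mul_one, RCLike.norm_ofNat, le_div_iff₀ two_pos,
    ← Real.abs_sinh, mul_comm, ← abs_two, ← abs_mul]
  simpa [Real.sinh_eq, mul_div_cancel₀] using h

lemma Complex.abs_sin_re_le_norm_sin (w : ℂ) : |Real.sin w.re| ≤ ‖sin w‖ := by
  have hre : (sin w).re = Real.sin w.re * Real.cosh w.im := by
    conv_lhs => rw [← re_add_im w, sin_add_mul_I]
    simp [← ofReal_sin, ← ofReal_cos, ← ofReal_cosh, ← ofReal_sinh]
  calc |Real.sin w.re| ≤ |Real.sin w.re| * Real.cosh w.im :=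
        le_mul_of_one_le_right (abs_nonneg _) (Real.one_le_cosh _)
    _ = |(sin w).re| := by rw [hre, abs_mul, abs_of_pos (Real.cosh_pos _)]
    _ ≤ ‖sin w‖ := abs_re_le_norm _

lemma Real.exp_div_four_le_sinh {t : ℝ} (ht : 1 ≤ t) : Real.exp t / 4 ≤ Real.sinh t := by
  have h2 : 2 ≤ Real.exp t * Real.exp t := by
    rw [← Real.exp_add]; linarith [Real.add_one_le_exp (t + t)]
  have hp := Real.exp_pos t
  rw [Real.sinh_eq, Real.exp_neg]
  field_simp
  nlinarith

noncomputable def sinPiSub (s : ℝ) (z : ℂ) : ℂ := sin (π * (z - s))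

noncomputable def sinPiProd (a b : ℝ) : ℂ → ℂ := sinPiSub 0 * sinPiSub a * sinPiSub b

lemma sinPiSub_eq_zero_iff {s : ℝ} {z : ℂ} : sinPiSub s z = 0 ↔ ∃ k : ℤ, z = k + s := by
  have hπ : (π : ℂ) ≠ 0 := ofReal_ne_zero.2 Real.pi_ne_zero
  simp only [sinPiSub, sin_eq_zero_iff, mul_comm _ (π : ℂ), mul_right_inj' hπ, sub_eq_iff_eq_add]

lemma sinPiSub_ne_zero {s : ℝ} {z : ℂ} {k : ℤ} (h₀ : k < z.re - s) (h₁ : z.re - s < k + 1) :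
    sinPiSub s z ≠ 0 := by
  rintro h
  obtain ⟨l, rfl⟩ := sinPiSub_eq_zero_iff.1 h
  simp only [add_re, intCast_re, ofReal_re, add_sub_cancel_right, Int.cast_lt] at h₀ h₁
  norm_cast at h₁
  omega

lemma not_sinPiSub_eq_zero_and {s t : ℝ} (h₀ : s < t) (h₁ : t < s + 1) {z : ℂ} :
    ¬(sinPiSub s z = 0 ∧ sinPiSub t z = 0) := by
  rintro ⟨hs, ht⟩
  obtain ⟨k, rfl⟩ := sinPiSub_eq_zero_iff.1 hs
  exact sinPiSub_ne_zero (k := k - 1) (by simp; linarith) (by simp; linarith) ht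

lemma exists_nat_add_one_eq_of_sinPiSub_eq_zero {s : ℝ} (hs : s < 1) {z : ℂ}
    (hz : -1 < z.re) (h : sinPiSub s z = 0) : ∃ n : ℕ, z + 1 = n + s := by
  obtain ⟨k, rfl⟩ := sinPiSub_eq_zero_iff.1 h
  have hk : -2 < k := by
    have : (-2 : ℝ) < k := by simp at hz; linarith
    exact_mod_cast this
  refine ⟨(k + 1).toNat, ?_⟩
  have : ((k + 1).toNat : ℤ) = k + 1 := Int.toNat_of_nonneg (by omega)
  rw [show (((k + 1).toNat : ℕ) : ℂ) = (((k + 1).toNat : ℤ) : ℂ) by norm_cast, this]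
  push_cast; ring

lemma eq_zero_of_sinPiProd_eq_zero {f : ℂ → ℂ} {a b : ℝ} (hab : a < b) (hb : b < 1)
    (hzero : ∀ n : ℕ, f n = 0 ∧ f (n + a) = 0 ∧ f (n + b) = 0) {z : ℂ} (hz : -1 < z.re)
    (hP : sinPiProd a b z = 0) : f (z + 1) = 0 := by
  simp only [sinPiProd, Pi.mul_apply, mul_eq_zero] at hP
  rcases hP with (h | h) | h
  · obtain ⟨n, hn⟩ := exists_nat_add_one_eq_of_sinPiSub_eq_zero one_pos hz h
    simpa [hn] using (hzero n).1
  · obtain ⟨n, hn⟩ := exists_nat_add_one_eq_of_sinPiSub_eq_zero (hab.trans hb) hz h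
    simpa [hn] using (hzero n).2.1
  · obtain ⟨n, hn⟩ := exists_nat_add_one_eq_of_sinPiSub_eq_zero hb hz h
    simpa [hn] using (hzero n).2.2

lemma hasDerivAt_sinPiSub (s : ℝ) (z : ℂ) :
    HasDerivAt (sinPiSub s) (cos (π * (z - s)) * π) z := by
  show HasDerivAt (fun z => sin (π * (z - s))) _ z
  simpa using (((hasDerivAt_id z).sub_const (s : ℂ)).const_mul (π : ℂ)).csin

lemma deriv_sinPiSub_ne_zero {s : ℝ} {z : ℂ} (h : sinPiSub s z = 0) :
    deriv (sinPiSub s) z ≠ 0 := by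
  rw [(hasDerivAt_sinPiSub s z).deriv]
  refine mul_ne_zero (fun hcos => ?_) (ofReal_ne_zero.2 Real.pi_ne_zero)
  rw [sinPiSub] at h
  simpa [h, hcos] using sin_sq_add_cos_sq (π * (z - s))

lemma differentiable_sinPiProd (a b : ℝ) : Differentiable ℂ (sinPiProd a b) := fun z =>
  (((hasDerivAt_sinPiSub 0 z).mul (hasDerivAt_sinPiSub a z)).mul
    (hasDerivAt_sinPiSub b z)).differentiableAt

lemma deriv_sinPiProd_ne_zero {a b : ℝ} (ha : 0 < a) (hab : a < b) (hb : b < 1) {z : ℂ}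
    (h : sinPiProd a b z = 0) : deriv (sinPiProd a b) z ≠ 0 := by
  have hd : ∀ s, DifferentiableAt ℂ (sinPiSub s) z := fun s =>
    (hasDerivAt_sinPiSub s z).differentiableAt
  refine deriv_mul_ne_zero_of_eq_zero ((hd 0).mul (hd a)) (hd b) h (fun h₀ => ?_)
    deriv_sinPiSub_ne_zero ?_
  · refine deriv_mul_ne_zero_of_eq_zero (hd 0) (hd a) h₀ deriv_sinPiSub_ne_zero
      deriv_sinPiSub_ne_zero (not_sinPiSub_eq_zero_and (by simpa) (by simpa using hab.trans hb))
  · rintro ⟨h₀, hb'⟩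
    rcases mul_eq_zero.1 h₀ with h₀ | h₀
    · exact not_sinPiSub_eq_zero_and (by linarith) (by simpa using hb) ⟨h₀, hb'⟩
    · exact not_sinPiSub_eq_zero_and hab (by linarith) ⟨h₀, hb'⟩

lemma exp_pi_abs_im_div_four_le_norm_sinPiSub (s : ℝ) {z : ℂ} (h : 1 ≤ |z.im|) :
    Real.exp (π * |z.im|) / 4 ≤ ‖sinPiSub s z‖ := by
  have him : (π * (z - s) : ℂ).im = π * z.im := by simp
  calc Real.exp (π * |z.im|) / 4 ≤ Real.sinh (π * |z.im|) :=
        Real.exp_div_four_le_sinh (by nlinarith [Real.pi_gt_three])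
    _ = Real.sinh |(π * (z - s) : ℂ).im| := by rw [him, abs_mul, abs_of_pos Real.pi_pos]
    _ ≤ ‖sinPiSub s z‖ := sinh_abs_im_le_norm_sin _

lemma exp_three_pi_abs_im_div_le_norm_sinPiProd (a b : ℝ) {z : ℂ} (h : 1 ≤ |z.im|) :
    Real.exp (3 * π * |z.im|) / 64 ≤ ‖sinPiProd a b z‖ := by
  have hs := fun s => exp_pi_abs_im_div_four_le_norm_sinPiSub s h
  calc Real.exp (3 * π * |z.im|) / 64
      = Real.exp (π * |z.im|) / 4 * (Real.exp (π * |z.im|) / 4) * (Real.exp (π * |z.im|) / 4) := by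
        rw [show 3 * π * |z.im| = π * |z.im| + π * |z.im| + π * |z.im| by ring, Real.exp_add,
          Real.exp_add]
        ring
    _ ≤ ‖sinPiProd a b z‖ := by
        simp only [sinPiProd, Pi.mul_apply, norm_mul]
        gcongr <;> apply hs

lemma norm_sinPiProd_re_le (a b : ℝ) (z : ℂ) : ‖sinPiProd a b z.re‖ ≤ ‖sinPiProd a b z‖ := by
  have hs : ∀ s, ‖sinPiSub s z.re‖ ≤ ‖sinPiSub s z‖ := fun s => by
    have h := abs_sin_re_le_norm_sin (π * (z - s))
    have hre : sinPiSub s z.re = ((Real.sin (π * (z.re - s)) : ℝ) : ℂ) := by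
      simp [sinPiSub]
    rw [hre, norm_real, Real.norm_eq_abs]
    simpa [sinPiSub] using h
  simp only [sinPiProd, Pi.mul_apply, norm_mul]
  gcongr <;> apply hs

lemma norm_sinPiProd_add_int (a b : ℝ) (z : ℂ) (n : ℤ) :
    ‖sinPiProd a b (z + n)‖ = ‖sinPiProd a b z‖ := by
  have hs : ∀ s, ‖sinPiSub s (z + n)‖ = ‖sinPiSub s z‖ := fun s => by
    rw [sinPiSub, sinPiSub, show (π : ℂ) * (z + n - s) = π * (z - s) + n * π by ring,
      sin_antiperiodic.add_int_mul_eq, norm_mul]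
    simp
  simp only [sinPiProd, Pi.mul_apply, norm_mul, hs]

lemma sinPiProd_half_ne_zero {a b : ℝ} (ha : 0 < a) (hab : a < b) (hb : b < 1) :
    sinPiProd a b (a / 2 : ℝ) ≠ 0 := by
  simp only [sinPiProd, Pi.mul_apply, ne_eq, mul_eq_zero, not_or]
  refine ⟨⟨sinPiSub_ne_zero (k := 0) ?_ ?_, sinPiSub_ne_zero (k := -1) ?_ ?_⟩,
    sinPiSub_ne_zero (k := -1) ?_ ?_⟩ <;> simp <;> linarith

noncomputable def dampedQuotient (g : ℂ → ℂ) (a b c : ℝ) (z : ℂ) : ℂ :=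
  exp (-(c * z)) * patchedDiv g (sinPiProd a b) z

section DampedQuotient

variable {g : ℂ → ℂ} {a b C c : ℝ}

lemma norm_dampedQuotient_le (hc : 0 ≤ c)
    (hgrowth : ∀ z, 0 ≤ z.re → ‖g z‖ ≤ C * Real.exp (c * ‖z‖)) {z : ℂ} (hz : 0 ≤ z.re)
    (hP : sinPiProd a b z ≠ 0) :
    ‖dampedQuotient g a b c z‖ ≤ C * Real.exp (c * |z.im|) / ‖sinPiProd a b z‖ := by
  have hC : 0 ≤ C :=
    nonneg_of_mul_nonneg_left ((norm_nonneg _).trans (hgrowth z hz)) (Real.exp_pos _)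
  have hnorm : ‖z‖ ≤ z.re + |z.im| := by
    simpa [abs_of_nonneg hz] using norm_le_abs_re_add_abs_im z
  rw [dampedQuotient, patchedDiv, if_neg hP, norm_mul, norm_div, norm_exp, mul_div_assoc',
    div_le_div_iff_of_pos_right (norm_pos_iff.2 hP)]
  calc Real.exp (-(c * z) : ℂ).re * ‖g z‖
      ≤ Real.exp (-(c * z.re)) * (C * Real.exp (c * ‖z‖)) := by
        simpa using mul_le_mul_of_nonneg_left (hgrowth z hz) (Real.exp_pos _).le
    _ = C * Real.exp (c * (‖z‖ - z.re)) := by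
        rw [mul_left_comm, ← Real.exp_add]; ring_nf
    _ ≤ C * Real.exp (c * |z.im|) := by gcongr; linarith

lemma norm_dampedQuotient_le_of_one_le_abs_im (hc : 0 ≤ c)
    (hgrowth : ∀ z, 0 ≤ z.re → ‖g z‖ ≤ C * Real.exp (c * ‖z‖)) {z : ℂ} (hz : 0 ≤ z.re)
    (him : 1 ≤ |z.im|) :
    ‖dampedQuotient g a b c z‖ ≤ 64 * C * Real.exp (-((3 * π - c) * |z.im|)) := by
  have hP := exp_three_pi_abs_im_div_le_norm_sinPiProd a b him
  have hP₀ : 0 < ‖sinPiProd a b z‖ := (by positivity : 0 < Real.exp _ / 64).trans_le hP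
  have hC : 0 ≤ C :=
    nonneg_of_mul_nonneg_left ((norm_nonneg _).trans (hgrowth z hz)) (Real.exp_pos _)
  refine (norm_dampedQuotient_le hc hgrowth hz (norm_pos_iff.1 hP₀)).trans ?_
  rw [div_le_iff₀ hP₀]
  calc C * Real.exp (c * |z.im|)
      = 64 * C * Real.exp (-((3 * π - c) * |z.im|)) * (Real.exp (3 * π * |z.im|) / 64) := by
        rw [show c * |z.im| = -((3 * π - c) * |z.im|) + 3 * π * |z.im| by ring, Real.exp_add]
        ring
    _ ≤ _ := by gcongr

lemma norm_dampedQuotient_le_of_re_eq (hc : 0 ≤ c)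
    (hgrowth : ∀ z, 0 ≤ z.re → ‖g z‖ ≤ C * Real.exp (c * ‖z‖)) {t : ℝ}
    (ht : sinPiProd a b t ≠ 0) {n : ℕ} {z : ℂ} (hz : z.re = n + t) (hz₀ : 0 ≤ z.re) :
    ‖dampedQuotient g a b c z‖ ≤ C * Real.exp (c * |z.im|) / ‖sinPiProd a b t‖ := by
  have hP : ‖sinPiProd a b t‖ ≤ ‖sinPiProd a b z‖ := by
    rw [← norm_sinPiProd_add_int a b t n]
    convert norm_sinPiProd_re_le a b z using 4
    push_cast [hz]; ring
  have hC : 0 ≤ C :=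
    nonneg_of_mul_nonneg_left ((norm_nonneg _).trans (hgrowth z hz₀)) (Real.exp_pos _)
  have hP₀ : 0 < ‖sinPiProd a b t‖ := norm_pos_iff.2 ht
  refine (norm_dampedQuotient_le hc hgrowth hz₀ (norm_pos_iff.1 (hP₀.trans_le hP))).trans ?_
  gcongr

lemma differentiableOn_dampedQuotient (ha : 0 < a) (hab : a < b) (hb : b < 1) {U : Set ℂ}
    (hU : IsOpen U) (hg : DifferentiableOn ℂ g U)
    (hzero : ∀ z ∈ U, sinPiProd a b z = 0 → g z = 0) :
    DifferentiableOn ℂ (dampedQuotient g a b c) U :=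
  (Differentiable.differentiableOn (by fun_prop)).mul (differentiableOn_patchedDiv hU hg
    (differentiable_sinPiProd a b).differentiableOn
    fun z hz hP => ⟨hzero z hz hP, deriv_sinPiProd_ne_zero ha hab hb hP⟩)

lemma exists_norm_dampedQuotient_le (ha : 0 < a) (hab : a < b) (hb : b < 1) (hc : 0 ≤ c)
    (hc' : c ≤ 3 * π) (hgrowth : ∀ z, 0 ≤ z.re → ‖g z‖ ≤ C * Real.exp (c * ‖z‖))
    (hF : DiffContOnCl ℂ (dampedQuotient g a b c) {z | 0 < z.re}) :
    ∃ B, ∀ z, 0 ≤ z.re →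
      ‖dampedQuotient g a b c z‖ ≤ B * Real.exp (-((3 * π - c) * |z.im|)) := by
  set F := dampedQuotient g a b c
  have hC : 0 ≤ C :=
    nonneg_of_mul_nonneg_left ((norm_nonneg _).trans (hgrowth 0 le_rfl)) (Real.exp_pos _)
  have hoff : ∀ z, 0 ≤ z.re → 1 ≤ |z.im| → ‖F z‖ ≤ 64 * C * Real.exp (-((3 * π - c) * |z.im|)) :=
    fun z hz him => norm_dampedQuotient_le_of_one_le_abs_im hc hgrowth hz him
  obtain ⟨M₀, hM₀⟩ := (isCompact_Icc (a := (-2 : ℝ)) (b := 2)).image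
    (by fun_prop : Continuous fun y : ℝ => (y : ℂ) * I) |>.exists_bound_of_continuousOn
    (hF.continuousOn.mono (by rw [closure_setOfPred_lt_re]; rintro _ ⟨y, -, rfl⟩; simp))
  set M := max M₀ (max (64 * C) (C * Real.exp (c * 2) / ‖sinPiProd a b (a / 2 : ℝ)‖))
  have hstrip : ∀ z, 0 ≤ z.re → |z.im| ≤ 2 → ‖F z‖ ≤ M := by
    refine fun z hz hzh => norm_le_of_half_strip hF (fun y hy => ?_) (fun w hw hwh => ?_)
      (fun t ht => ⟨⌈t⌉₊ + a / 2, by linarith [Nat.le_ceil t], fun w hw hwh => ?_⟩) hz hzh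
    · exact (hM₀ _ ⟨y, abs_le.1 hy, rfl⟩).trans (le_max_left _ _)
    · refine (hoff w hw (by rw [hwh]; norm_num)).trans ?_
      refine (mul_le_of_le_one_right (by positivity) (Real.exp_le_one_iff.2 ?_)).trans
        ((le_max_left _ _).trans (le_max_right _ _))
      nlinarith [abs_nonneg w.im]
    · refine (norm_dampedQuotient_le_of_re_eq hc hgrowth (sinPiProd_half_ne_zero ha hab hb) hw
        (by rw [hw]; positivity)).trans ((?_ : _ ≤ _).trans ((le_max_right _ _).trans
        (le_max_right _ _)))
      gcongr
  refine ⟨max (64 * C) (M * Real.exp (2 * (3 * π - c))), fun z hz => ?_⟩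
  rcases le_total 1 |z.im| with h | h
  · exact (hoff z hz h).trans (by gcongr; exact le_max_left _ _)
  · have hM : 0 ≤ M := (by positivity : (0 : ℝ) ≤ 64 * C).trans ((le_max_left _ _).trans
      (le_max_right _ _))
    calc ‖F z‖ ≤ M := hstrip z hz (by linarith)
      _ ≤ M * Real.exp (2 * (3 * π - c)) * Real.exp (-((3 * π - c) * |z.im|)) := by
        rw [mul_assoc, ← Real.exp_add]
        refine le_mul_of_one_le_right hM (Real.one_le_exp_iff.2 ?_)
        nlinarith
      _ ≤ _ := by gcongr; exact le_max_right _ _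

end DampedQuotient

theorem eqOn_zero_of_eq_zero_of_sinPiProd_eq_zero {g : ℂ → ℂ} {a b C c : ℝ} (ha : 0 < a)
    (hab : a < b) (hb : b < 1) (hc : 0 ≤ c) (hc' : c < 3 * π)
    (hg : DifferentiableOn ℂ g {z | -1 < z.re})
    (hgrowth : ∀ z, 0 ≤ z.re → ‖g z‖ ≤ C * Real.exp (c * ‖z‖))
    (hzero : ∀ z ∈ {z : ℂ | -1 < z.re}, sinPiProd a b z = 0 → g z = 0) :
    EqOn g 0 {z | -1 < z.re} := by
  have hU : IsOpen {z : ℂ | -1 < z.re} := isOpen_lt continuous_const continuous_re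
  have hFd := differentiableOn_dampedQuotient (c := c) ha hab hb hU hg hzero
  have hF : DiffContOnCl ℂ (dampedQuotient g a b c) {z | 0 < z.re} := by
    refine (hFd.mono ?_).diffContOnCl
    rw [closure_setOfPred_lt_re]
    exact fun z (hz : 0 ≤ z.re) => show -1 < z.re by linarith
  obtain ⟨B, hB⟩ := exists_norm_dampedQuotient_le ha hab hb hc hc'.le hgrowth hF
  have hF₀ : EqOn (dampedQuotient g a b c) 0 {z | -1 < z.re} := by
    refine (hFd.analyticOnNhd hU).eqOn_zero_of_preconnected_of_eventuallyEq_zero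
      (convex_halfSpace_re_gt (-1)).isPreconnected (z₀ := 1) (by simp) ?_
    filter_upwards [(isOpen_lt continuous_const continuous_re).mem_nhds
      (by simp : (0 : ℝ) < (1 : ℂ).re)] with z hz
    exact eqOn_zero_of_norm_le_mul_exp_neg_abs_im hF (by linarith) hB (le_of_lt hz)
  intro z hz
  have := hF₀ hz
  rw [← patchedDiv_mul_cancel (hzero z hz)]
  simp only [dampedQuotient, Pi.zero_apply, mul_eq_zero, exp_ne_zero, false_or] at this
  simp [this]

theorem carlson_type_uniqueness (f : ℂ → ℂ)
    (hcont : ContinuousOn f {z : ℂ | 0 ≤ z.re})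
    (hdiff : DifferentiableOn ℂ f {z : ℂ | 0 < z.re})
    (C c : ℝ) (hC : 0 < C) (hc : c < 3 * Real.pi)
    (hgrowth : ∀ z : ℂ, 0 ≤ z.re → ‖f z‖ ≤ C * Real.exp (c * ‖z‖))
    (a b : ℝ) (ha : 0 < a) (hab : a < b) (hb : b < 1)
    (hzero : ∀ n : ℕ, f (n : ℂ) = 0 ∧ f ((n : ℂ) + (a : ℂ)) = 0 ∧ f ((n : ℂ) + (b : ℂ)) = 0) :
    ∀ z : ℂ, 0 ≤ z.re → f z = 0 := by
  have hshift : DifferentiableOn ℂ (fun z => f (z + 1)) {z | -1 < z.re} :=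
    hdiff.comp (by fun_prop) fun z (hz : -1 < z.re) => show 0 < (z + 1).re by simp; linarith
  have hgrowth' : ∀ z : ℂ, 0 ≤ z.re →
      ‖f (z + 1)‖ ≤ C * Real.exp (max c 0) * Real.exp (max c 0 * ‖z‖) := by
    intro z hz
    refine (hgrowth (z + 1) (by simp; linarith)).trans ?_
    rw [mul_assoc, ← Real.exp_add]
    gcongr
    calc c * ‖z + 1‖ ≤ max c 0 * ‖z + 1‖ := by gcongr; exact le_max_left _ _
      _ ≤ max c 0 * (‖z‖ + 1) := by gcongr; simpa using norm_add_le z 1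
      _ = max c 0 + max c 0 * ‖z‖ := by ring
  have hpos : EqOn f 0 {z | 0 < z.re} := fun z (hz : 0 < z.re) => by
    simpa using eqOn_zero_of_eq_zero_of_sinPiProd_eq_zero ha hab hb (le_max_right c 0)
      (max_lt hc (by positivity)) hshift hgrowth'
      (fun w hw hP => eq_zero_of_sinPiProd_eq_zero hab hb hzero hw hP)
      (show -1 < (z - 1).re by simp; linarith)
  intro z hz
  exact EqOn.of_subset_closure hpos hcont continuousOn_const (fun w (hw : 0 < w.re) => hw.le)
    (by rw [closure_setOfPred_lt_re]) hz
end
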